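/- With P self-uncorrelated, p_1 = A, p_n = G, and G_{n,ℓ} defined by G_{n,ℓ} = 3^ℓ for 0 ≤ ℓ < n and G_{n,ℓ} = ∑_{i=1}^{n-1} |P̄_i| G_{n,ℓ-i} for ℓ ≥ n, the number of strings of length ℓ expressible as P^{t_1-1}\bar{p}_{t_1} ⋯ P^{t_r-1}\bar{p}_{t_r} W (with 1 ≤ t_j < n, \bar{p}_{t_j} ∈ P̄_{t_j}, W ∈ {A,T,C}^{t_0}, t_0 < n) is exactly G_{n,ℓ}; i.e., the encoding x ↦ CodePSC(P,ℓ,x) is a bijection from {0,1,...,G_{n,ℓ}−1} to this set of strings. -/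

import Mathlib

inductive Base : Type
  | A | T | G | C
deriving DecidableEq

/-- A word `X` is self-uncorrelated if no proper nonempty prefix of `X`
is also a suffix of `X`. -/
def selfUncorr {α : Type*} (X : List α) : Prop :=
  ∀ k : ℕ, 0 < k → k < X.length → X.take k ≠ X.drop (X.length - k)

/-- `PSFact P L W Z` : `Z` is the codeword `P^{t₁-1} q₁ ⋯ P^{tᵣ-1} qᵣ W` produced by
the prefix-synchronized encoding with block list `L` and terminal word
`W ∈ {A,T,C}^{t₀}`, `t₀ < n`. -/
inductive PSFact (P : List Base) : List (ℕ × Base) → List Base → List Base → Prop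
  | term (W : List Base) (hlen : W.length < P.length)
      (hW : ∀ a ∈ W, a ≠ Base.G) : PSFact P [] W W
  | block (t : ℕ) (q : Base) (L : List (ℕ × Base)) (W Z : List Base)
      (ht1 : 1 ≤ t) (ht2 : t < P.length) (hq : q ≠ Base.G)
      (hq2 : ∀ (h : t - 1 < P.length), q ≠ P.get ⟨t - 1, h⟩)
      (hrem : P.length ≤ t + Z.length)
      (hZ : PSFact P L W Z) : PSFact P ((t, q) :: L) W (P.take (t - 1) ++ q :: Z)

/-! A codeword of length `ℓ ≥ n` begins with exactly one block `P^{t-1} q` with `1 ≤ t < n` and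
`q ∈ P̄_t`: two different blocks disagree at the position of the shorter one's last letter,
where one word reads `q ≠ p_t` and the other reads `p_t`. Removing that block leaves an
arbitrary codeword of length `ℓ - t`, which gives the recurrence for `G_{n,ℓ}`; below length `n`
the codewords are exactly the words over `{A,T,C}`. -/

instance : Fintype Base :=
  ⟨{Base.A, Base.T, Base.G, Base.C}, by intro x; cases x <;> simp⟩

theorem List.ncard_setOf_length_eq_forall_mem {α : Type*} (p : α → Prop) [Fintype {a // p a}]
    (ℓ : ℕ) :
    {Z : List α | Z.length = ℓ ∧ ∀ a ∈ Z, p a}.ncard = Fintype.card {a // p a} ^ ℓ := by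
  set f : (Fin ℓ → {a // p a}) → List α := fun v => List.ofFn fun i => (v i).val
  have hinj : Function.Injective f := fun v w h =>
    funext fun i => Subtype.val_injective (congrFun (List.ofFn_injective h) i)
  have hrange : Set.range f = {Z : List α | Z.length = ℓ ∧ ∀ a ∈ Z, p a} := by
    ext Z
    constructor
    · rintro ⟨v, rfl⟩
      refine ⟨List.length_ofFn, fun a ha => ?_⟩
      obtain ⟨i, rfl⟩ := List.mem_ofFn.mp ha
      exact (v i).2
    · rintro ⟨rfl, hZ⟩
      exact ⟨fun i => ⟨Z[i], hZ _ (List.getElem_mem _)⟩, List.ofFn_getElem⟩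
  rw [← hrange, Set.ncard_range_of_injective hinj, Nat.card_eq_fintype_card, Fintype.card_fun,
    Fintype.card_fin]

theorem List.getElem?_eq_of_take_append_cons_eq {α : Type*} {P Z Z' : List α} {q q' : α}
    {k k' : ℕ} (hk : k < k') (hk' : k' ≤ P.length)
    (h : P.take k ++ q :: Z = P.take k' ++ q' :: Z') : P[k]? = some q := by
  have hlen : (P.take k).length = k := List.length_take_of_le (by omega)
  have := congrArg (·[k]?) h
  simp only [List.getElem?_append_right hlen.le, hlen, Nat.sub_self,
    List.getElem?_append_left (by simp; omega : k < (P.take k').length)] at this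
  simpa [List.getElem?_take, hk] using this.symm

theorem List.take_append_cons_inj {α : Type*} {P Z Z' : List α} {q q' : α} {k k' : ℕ}
    (hk : k < P.length) (hk' : k' < P.length) (hq : P[k]? ≠ some q) (hq' : P[k']? ≠ some q')
    (h : P.take k ++ q :: Z = P.take k' ++ q' :: Z') : k = k' ∧ q = q' ∧ Z = Z' := by
  rcases lt_trichotomy k k' with hlt | rfl | hgt
  · exact absurd (getElem?_eq_of_take_append_cons_eq hlt hk'.le h) hq
  · simpa using h
  · exact absurd (getElem?_eq_of_take_append_cons_eq hgt hk.le h.symm) hq'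

section CodeSet

variable (P : List Base)

def codeSet (ℓ : ℕ) : Set (List Base) :=
  {Z | Z.length = ℓ ∧ ∃ L W, PSFact P L W Z}

/-- The letters allowed right after `P^{t-1}` in a block: `P̄_t = {A,T,C} \ {p_t}`. -/
def blockLetters (t : ℕ) : Finset Base :=
  Finset.univ.filter fun q => q ≠ Base.G ∧ P[t - 1]? ≠ some q

variable {P}

theorem card_blockLetters {t : ℕ} (ht : t - 1 < P.length) :
    (blockLetters P t).card = if P[t - 1]? = some Base.G then 3 else 2 := by
  rw [blockLetters, List.getElem?_eq_getElem ht]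
  generalize P[t - 1] = p
  cases p <;> decide

theorem length_take_append_cons {t : ℕ} (ht : t ≤ P.length) (q : Base) (Z : List Base) :
    (P.take (t - 1) ++ q :: Z).length = (t - 1) + 1 + Z.length := by
  simp only [List.length_append, List.length_take, List.length_cons,
    Nat.min_eq_left (Nat.sub_le t 1 |>.trans ht)]
  omega

theorem codeSet_of_lt_length {ℓ : ℕ} (hℓ : ℓ < P.length) :
    codeSet P ℓ = {Z | Z.length = ℓ ∧ ∀ a ∈ Z, a ≠ Base.G} := by
  ext Z
  constructor
  · rintro ⟨rfl, L, W, hZ⟩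
    cases hZ with
    | term _ _ hW => exact ⟨rfl, hW⟩
    | block _ _ _ _ _ _ ht2 _ _ hrem _ =>
      rw [length_take_append_cons ht2.le] at hℓ
      omega
  · rintro ⟨hlen, hZ⟩
    exact ⟨hlen, [], Z, .term Z (hlen ▸ hℓ) hZ⟩

theorem codeSet_eq_biUnion {ℓ : ℕ} (hℓ : P.length ≤ ℓ) :
    codeSet P ℓ = ⋃ b ∈ (Finset.Icc 1 (P.length - 1)).sigma (blockLetters P),
      (P.take (b.1 - 1) ++ b.2 :: ·) '' codeSet P (ℓ - b.1) := by
  ext Z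
  simp only [Set.mem_iUnion, Finset.mem_sigma, Finset.mem_Icc, blockLetters, Finset.mem_filter,
    Finset.mem_univ, true_and, exists_prop, Set.mem_image, Sigma.exists]
  constructor
  · rintro ⟨hlen, L, W, hZ⟩
    cases hZ with
    | term _ hW _ => omega
    | block t q L W Z' ht1 ht2 hq hq2 _ hZ' =>
      rw [length_take_append_cons ht2.le] at hlen
      refine ⟨t, q, ⟨⟨ht1, by omega⟩, hq, ?_⟩, Z', ⟨by omega, L, W, hZ'⟩, rfl⟩
      rw [List.getElem?_eq_getElem (by omega), ne_eq, Option.some_inj]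
      exact fun h => hq2 (by omega) h.symm
  · rintro ⟨t, q, ⟨⟨ht1, ht2⟩, hq, hq2⟩, Z', ⟨hlen, L, W, hZ'⟩, rfl⟩
    refine ⟨by rw [length_take_append_cons (by omega)]; omega, (t, q) :: L, W,
      .block t q L W Z' ht1 (by omega) hq (fun h hqp => hq2 ?_) (by omega) hZ'⟩
    rw [List.getElem?_eq_getElem h, hqp, List.get_eq_getElem]

theorem pairwiseDisjoint_blocks (S : ℕ → Set (List Base)) :
    (↑((Finset.Icc 1 (P.length - 1)).sigma (blockLetters P)) : Set ((_ : ℕ) × Base))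
      |>.PairwiseDisjoint fun b => (P.take (b.1 - 1) ++ b.2 :: ·) '' S b.1 := by
  rintro ⟨t, q⟩ hb ⟨t', q'⟩ hb' hne
  simp only [Finset.coe_sigma, Set.mem_sigma_iff, Finset.coe_Icc, Set.mem_Icc, blockLetters,
    Finset.coe_filter, Finset.mem_univ, true_and, Set.mem_ofPred_eq] at hb hb'
  refine Set.disjoint_left.mpr ?_
  rintro _ ⟨Z, -, rfl⟩ ⟨Z', -, h⟩
  obtain ⟨htt, rfl, -⟩ := List.take_append_cons_inj (by omega) (by omega) hb'.2.2 hb.2.2 h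
  obtain rfl : t' = t := by omega
  exact hne rfl

theorem ncard_codeSet_of_length_le {ℓ : ℕ} (hℓ : P.length ≤ ℓ) :
    (codeSet P ℓ).ncard = ∑ t ∈ Finset.Icc 1 (P.length - 1),
      (if P[t - 1]? = some Base.G then 3 else 2) * (codeSet P (ℓ - t)).ncard := by
  have hfin (m : ℕ) : (codeSet P m).Finite :=
    (List.finite_length_eq Base m).subset fun _ hZ => hZ.1
  have hinj (t : ℕ) (q : Base) : Function.Injective (P.take (t - 1) ++ q :: ·) :=
    fun _ _ h => List.cons_injective (List.append_cancel_left h)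
  rw [codeSet_eq_biUnion hℓ, ← Finset.set_biUnion_coe,
    Set.Finite.ncard_biUnion (Finset.finite_toSet _) (fun b _ => (hfin _).image _)
      (pairwiseDisjoint_blocks fun t => codeSet P (ℓ - t)),
    finsum_mem_coe_finset, Finset.sum_sigma]
  refine Finset.sum_congr rfl fun t ht => ?_
  rw [Finset.mem_Icc] at ht
  simp only [Set.ncard_image_of_injective _ (hinj t _)]
  rw [Finset.sum_const, smul_eq_mul, card_blockLetters (by omega)]

end CodeSet

theorem stmt13_general (P : List Base) (n : ℕ) (hlenP : P.length = n)
    (G : ℕ → ℕ)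
    (hG1 : ∀ ℓ < n, G ℓ = 3 ^ ℓ)
    (hG2 : ∀ ℓ, n ≤ ℓ → G ℓ = ∑ i ∈ Finset.Icc 1 (n - 1),
      (if P[i - 1]? = some Base.G then 3 else 2) * G (ℓ - i)) :
    ∀ ℓ : ℕ,
      Set.ncard {Z : List Base | Z.length = ℓ ∧ ∃ L W, PSFact P L W Z} = G ℓ := by
  subst hlenP
  intro ℓ
  induction ℓ using Nat.strong_induction_on with
  | _ ℓ ih =>
  change (codeSet P ℓ).ncard = G ℓ
  rcases lt_or_ge ℓ P.length with hℓ | hℓ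
  · rw [codeSet_of_lt_length hℓ, List.ncard_setOf_length_eq_forall_mem, hG1 ℓ hℓ,
      show Fintype.card {b : Base // b ≠ Base.G} = 3 from rfl]
  · rw [ncard_codeSet_of_length_le hℓ, hG2 ℓ hℓ]
    refine Finset.sum_congr rfl fun t ht => ?_
    exact congrArg _ (ih (ℓ - t) (by rw [Finset.mem_Icc] at ht; omega))

/-- The number of prefix-synchronized codewords of length `ℓ` is exactly `G_{n,ℓ}`,
where `G_{n,ℓ} = 3^ℓ` for `ℓ < n` and
`G_{n,ℓ} = ∑_{i=1}^{n-1} |P̄_i| G_{n,ℓ-i}` for `ℓ ≥ n`; i.e. the encoding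
`x ↦ CodePSC(P,ℓ,x)` is a bijection from `{0,…,G_{n,ℓ}−1}` onto this set. -/
theorem stmt13 (P : List Base) (n : ℕ) (hlenP : P.length = n) (h2 : 2 ≤ n)
    (hsu : selfUncorr P)
    (hhead : P.head? = some Base.A) (hlast : P.getLast? = some Base.G)
    (G : ℕ → ℕ)
    (hG1 : ∀ ℓ < n, G ℓ = 3 ^ ℓ)
    (hG2 : ∀ ℓ, n ≤ ℓ → G ℓ = ∑ i ∈ Finset.Icc 1 (n - 1),
      (if P[i - 1]? = some Base.G then 3 else 2) * G (ℓ - i)) :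
    ∀ ℓ : ℕ,
      Set.ncard {Z : List Base | Z.length = ℓ ∧ ∃ L W, PSFact P L W Z} = G ℓ :=
  stmt13_general P n hlenP G hG1 hG2
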